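/- In ℙ𝕊², the projective classes of the two points a = ((1,1),(0,∞)) and b = ((1,∞),(1,1)) of 𝕊² are distinct, the sequence of classes [((1,n),(1,1))] converges both to [a] and to [b] as n → ∞, and consequently [a] and [b] cannot be separated by disjoint open sets in ℙ𝕊². -/

import Mathlib

open scoped ENNReal

/-- The parameter space `𝕊 = {0} ∪ (ℕ₀ × (0,∞])`, realized as a subtype of the
lexicographic product `ℕ ×ₗ ℝ≥0∞`: the pair `(0,0)` represents `0 ∈ 𝕊`, and the pairs
`(i,t)` with `t > 0` represent the elements of `ℕ₀ × (0,∞]`.  The induced subtype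
order is exactly the order of the paper: `0` is the least element, and
`(i,t) < (j,s)` iff `i < j`, or `i = j` and `t < s`. -/
abbrev Sp : Type :=
  {p : ℕ ×ₗ ℝ≥0∞ // ((ofLex p).1 = 0 ∧ (ofLex p).2 = 0) ∨ 0 < (ofLex p).2}

/-- The zero element of `𝕊`. -/
def sZero : Sp := ⟨toLex (0, 0), Or.inl ⟨rfl, rfl⟩⟩

/-- The element `(i,t)` of `𝕊`, for a level `i ∈ ℕ₀` and real part `t ∈ (0,∞]`. -/
def sNode (i : ℕ) (t : ℝ≥0∞) (ht : 0 < t) : Sp := ⟨toLex (i, t), Or.inr ht⟩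

/-- The level `ℒ(x)` of an element of `𝕊` (conventionally `0` on the zero element). -/
def sLevel (x : Sp) : ℕ := (ofLex x.val).1

/-- The real part `ℛ(x)` of an element of `𝕊` (equal to `0` exactly on the zero element). -/
def sRe (x : Sp) : ℝ≥0∞ := (ofLex x.val).2

theorem sNode_ne_sZero {i : ℕ} {t : ℝ≥0∞} (ht : 0 < t) : sNode i t ht ≠ sZero :=
  fun h => ht.ne' (congrArg sRe h)

/-- Scalar multiplication by an extended real `λ`: `λ·(i,t) = (i, λ·t)` and `λ·0 = 0`
(intended for positive scalars `λ ∈ (0,∞]`). -/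
noncomputable def sSMul (l : ℝ≥0∞) (x : Sp) : Sp :=
  if hx : sRe x = 0 then sZero
  else if hl : l = 0 then sZero
  else sNode (sLevel x) (l * sRe x) (ENNReal.mul_pos hl hx)

/-- `𝕊` carries the order topology. -/
instance : TopologicalSpace Sp := Preorder.topology Sp

instance : OrderTopology Sp := ⟨rfl⟩

/-- `𝕊² ∖ {(0,0)}`. -/
abbrev SV2 : Type := {v : Sp × Sp // v ≠ (sZero, sZero)}

/-- Projective equivalence on `𝕊² ∖ {(0,0)}`: `w = λ·v` coordinatewise for some real
`λ ∈ (0,∞)` (i.e. some positive finite extended real). -/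
def projRel2 (v w : SV2) : Prop :=
  ∃ l : ℝ≥0∞, 0 < l ∧ l ≠ ∞ ∧
    w.val.1 = sSMul l v.val.1 ∧ w.val.2 = sSMul l v.val.2

/-- The projectivization `ℙ𝕊²`, with the quotient topology. -/
abbrev PS2 : Type := Quot projRel2

/-- The point `((i,s),(j,t))` of `𝕊² ∖ {(0,0)}`. -/
def pt2 (i j : ℕ) (s t : ℝ≥0∞) (hs : 0 < s) (ht : 0 < t) : SV2 :=
  ⟨(sNode i s hs, sNode j t ht), fun h => sNode_ne_sZero hs (congrArg Prod.fst h)⟩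

/-- The point `a = ((1,1),(0,∞)) ∈ 𝕊²`. -/
noncomputable def a13 : SV2 := pt2 1 0 1 ∞ zero_lt_one (by simp)

/-- The point `b = ((1,∞),(1,1)) ∈ 𝕊²`. -/
noncomputable def b13 : SV2 := pt2 1 1 ∞ 1 (by simp) zero_lt_one

open Filter Topology

/-!
`Sp` is ordered lexicographically by (level, real part), so a sequence of nodes at level `i + 1`
whose real parts tend to `0` approaches the top node `(i, ∞)` of level `i` from above.  In `ℙ𝕊²`,
`((1, n+1), (1, 1)) ~ ((1, 1), (1, 1/(n+1)))`, and the two representatives converge in `𝕊²` to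
`b = ((1, ∞), (1, 1))` and to `a = ((1, 1), (0, ∞))` respectively.  The classes `[a]` and `[b]`
differ because the level of the second coordinate is a projective invariant.
-/

lemma sp_lt_iff {x y : Sp} :
    x < y ↔ sLevel x < sLevel y ∨ (sLevel x = sLevel y ∧ sRe x < sRe y) :=
  Prod.Lex.lt_iff

lemma sRe_pos_of_sLevel_ne_zero {x : Sp} (hx : sLevel x ≠ 0) : 0 < sRe x :=
  x.property.resolve_left fun h => hx h.1

lemma sLevel_sSMul {l : ℝ≥0∞} (hl : l ≠ 0) (x : Sp) : sLevel (sSMul l x) = sLevel x := by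
  unfold sSMul
  split_ifs with hx
  · exact (x.property.resolve_right hx.not_gt).1.symm
  · rfl

lemma sSMul_sNode {l : ℝ≥0∞} (hl : l ≠ 0) {i : ℕ} {t : ℝ≥0∞} (ht : 0 < t) :
    sSMul l (sNode i t ht) = sNode i (l * t) (ENNReal.mul_pos hl ht.ne') :=
  (dif_neg ht.ne').trans (dif_neg hl)

lemma tendsto_sNode {α : Type*} {l : Filter α} {i : ℕ} {f : α → ℝ≥0∞} {t : ℝ≥0∞}
    (hf : ∀ a, 0 < f a) (ht : 0 < t) (h : Tendsto f l (𝓝 t)) :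
    Tendsto (fun a => sNode i (f a) (hf a)) l (𝓝 (sNode i t ht)) := by
  rw [tendsto_order]
  constructor
  · intro b hb
    rcases sp_lt_iff.1 hb with hlt | ⟨heq, hre⟩
    · exact .of_forall fun _ => sp_lt_iff.2 (.inl hlt)
    · filter_upwards [h.eventually_const_lt hre] with a ha using sp_lt_iff.2 (.inr ⟨heq, ha⟩)
  · intro c hc
    rcases sp_lt_iff.1 hc with hlt | ⟨heq, hre⟩
    · exact .of_forall fun _ => sp_lt_iff.2 (.inl hlt)
    · filter_upwards [h.eventually_lt_const hre] with a ha using sp_lt_iff.2 (.inr ⟨heq, ha⟩)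

lemma tendsto_sNode_succ_top {α : Type*} {l : Filter α} {i : ℕ} {f : α → ℝ≥0∞}
    (hf : ∀ a, 0 < f a) (h : Tendsto f l (𝓝 0)) :
    Tendsto (fun a => sNode (i + 1) (f a) (hf a)) l (𝓝 (sNode i ∞ ENNReal.zero_lt_top)) := by
  rw [tendsto_order]
  constructor
  · intro b hb
    have hb' : sLevel b < i + 1 := by
      rcases sp_lt_iff.1 hb with hlt | ⟨heq, _⟩
      · exact Nat.lt_succ_of_lt hlt
      · exact heq ▸ Nat.lt_succ_self i
    exact .of_forall fun _ => sp_lt_iff.2 (.inl hb')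
  · intro c hc
    have hc' : i + 1 ≤ sLevel c := by
      rcases sp_lt_iff.1 hc with hlt | ⟨_, hre⟩
      · exact hlt
      · exact absurd hre not_top_lt
    rcases hc'.eq_or_lt with heq | hlt
    · have hre : 0 < sRe c := sRe_pos_of_sLevel_ne_zero (heq ▸ Nat.succ_ne_zero i)
      filter_upwards [h.eventually_lt_const hre] with a ha using sp_lt_iff.2 (.inr ⟨heq, ha⟩)
    · exact .of_forall fun _ => sp_lt_iff.2 (.inl hlt)

lemma tendsto_mk_pt2 {α : Type*} {l : Filter α} {i j i' j' : ℕ} {f g : α → ℝ≥0∞}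
    {s t : ℝ≥0∞} (hf : ∀ a, 0 < f a) (hg : ∀ a, 0 < g a) (hs : 0 < s) (ht : 0 < t)
    (h₁ : Tendsto (fun a => sNode i (f a) (hf a)) l (𝓝 (sNode i' s hs)))
    (h₂ : Tendsto (fun a => sNode j (g a) (hg a)) l (𝓝 (sNode j' t ht))) :
    Tendsto (fun a => Quot.mk projRel2 (pt2 i j (f a) (g a) (hf a) (hg a))) l
      (𝓝 (Quot.mk projRel2 (pt2 i' j' s t hs ht))) :=
  (continuous_quot_mk.tendsto _).comp (tendsto_subtype_rng.2 (h₁.prodMk_nhds h₂))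

lemma mk_pt2_eq_of_smul {i j : ℕ} {s t s' t' l : ℝ≥0∞} (hs : 0 < s) (ht : 0 < t)
    (hs' : 0 < s') (ht' : 0 < t') (hl : 0 < l) (hl' : l ≠ ∞) (hss' : s' = l * s)
    (htt' : t' = l * t) :
    Quot.mk projRel2 (pt2 i j s t hs ht) = Quot.mk projRel2 (pt2 i j s' t' hs' ht') := by
  subst hss' htt'
  exact Quot.sound ⟨l, hl, hl', (sSMul_sNode hl.ne' hs).symm, (sSMul_sNode hl.ne' ht).symm⟩

def level₂ : PS2 → ℕ :=
  Quot.lift (fun v => sLevel v.val.2) fun _ _ ⟨_, hl, _, _, h₂⟩ => by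
    rw [h₂, sLevel_sSMul hl.ne']

lemma natCast_add_one_pos (n : ℕ) : 0 < (n : ℝ≥0∞) + 1 :=
  lt_of_lt_of_le zero_lt_one le_add_self

lemma tendsto_natCast_add_one_top :
    Tendsto (fun n : ℕ => (n : ℝ≥0∞) + 1) atTop (𝓝 ∞) := by
  simpa only [Function.comp_def, Nat.cast_succ] using
    ENNReal.tendsto_nat_nhds_top.comp (tendsto_add_atTop_nat 1)

lemma tendsto_seq_b13 :
    Tendsto (fun n : ℕ => Quot.mk projRel2 (pt2 1 1 ((n : ℝ≥0∞) + 1) 1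
      (natCast_add_one_pos n) zero_lt_one)) atTop (𝓝 (Quot.mk projRel2 b13)) :=
  tendsto_mk_pt2 _ _ _ _ (tendsto_sNode _ _ tendsto_natCast_add_one_top) tendsto_const_nhds

lemma tendsto_seq_a13 :
    Tendsto (fun n : ℕ => Quot.mk projRel2 (pt2 1 1 ((n : ℝ≥0∞) + 1) 1
      (natCast_add_one_pos n) zero_lt_one)) atTop (𝓝 (Quot.mk projRel2 a13)) := by
  have hinv_pos (n : ℕ) : 0 < ((n : ℝ≥0∞) + 1)⁻¹ := ENNReal.inv_pos.2 (by simp)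
  have hrescale (n : ℕ) :
      Quot.mk projRel2 (pt2 1 1 ((n : ℝ≥0∞) + 1) 1 (natCast_add_one_pos n) zero_lt_one) =
        Quot.mk projRel2 (pt2 1 1 1 ((n : ℝ≥0∞) + 1)⁻¹ zero_lt_one (hinv_pos n)) :=
    mk_pt2_eq_of_smul _ _ _ _ (hinv_pos n) (by simp)
      (ENNReal.inv_mul_cancel (natCast_add_one_pos n).ne' (by simp)).symm (mul_one _).symm
  simp only [hrescale]
  refine tendsto_mk_pt2 _ _ _ _ tendsto_const_nhds (tendsto_sNode_succ_top _ ?_)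
  simpa only [ENNReal.inv_top] using tendsto_inv_iff.2 tendsto_natCast_add_one_top

/-- In `ℙ𝕊²`, the classes of `a = ((1,1),(0,∞))` and `b = ((1,∞),(1,1))` are distinct,
the sequence of classes `[((1,n),(1,1))]` converges to both `[a]` and `[b]` as
`n → ∞`, and consequently `[a]` and `[b]` cannot be separated by disjoint open sets. -/
theorem stmt13 :
    Quot.mk projRel2 a13 ≠ Quot.mk projRel2 b13 ∧
    Filter.Tendsto
      (fun n : ℕ => Quot.mk projRel2
        (pt2 1 1 ((n : ℝ≥0∞) + 1) 1 (lt_of_lt_of_le zero_lt_one le_add_self) zero_lt_one))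
      Filter.atTop (nhds (Quot.mk projRel2 a13)) ∧
    Filter.Tendsto
      (fun n : ℕ => Quot.mk projRel2
        (pt2 1 1 ((n : ℝ≥0∞) + 1) 1 (lt_of_lt_of_le zero_lt_one le_add_self) zero_lt_one))
      Filter.atTop (nhds (Quot.mk projRel2 b13)) ∧
    ∀ U V : Set PS2, IsOpen U → IsOpen V →
      Quot.mk projRel2 a13 ∈ U → Quot.mk projRel2 b13 ∈ V → (U ∩ V).Nonempty := by
  refine ⟨fun h => zero_ne_one (congrArg level₂ h), tendsto_seq_a13, tendsto_seq_b13, ?_⟩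
  intro U V hU hV haU hbV
  obtain ⟨n, hnU, hnV⟩ := ((tendsto_seq_a13.eventually (hU.mem_nhds haU)).and
    (tendsto_seq_b13.eventually (hV.mem_nhds hbV))).exists
  exact ⟨_, hnU, hnV⟩
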